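/- arXiv:2412.07061 — 3 statements merged into one kernel-verified Lean document; each statement's English description precedes it below -/
import Mathlib

section
/- Let α > 1 and x, y ∈ (0,1). If y ≥ x/α and 1 - y ≤ α·(1 - x), then y ≥ x^(log(1+α)/log(1+1/α)). -/
/-!
Put `a = α / (1 + α)` and `β = log (1 + α) / log (1 + 1/α)`, so that `a ^ β = 1 - a` and `β ≥ 1`.
On `(0, a]` the convex function `t ↦ t ^ β` lies below the line `t ↦ (1 - a) / a * t = t / α`
through the origin and `(a, a ^ β)`; on `[a, 1]` it lies below its chord `t ↦ 1 - α (1 - t)`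
through `(a, a ^ β)` and `(1, 1)`. The two hypotheses say that `y` dominates each of these lines.
-/

open Real Set

theorem rpow_le_of_rpow_eq_one_sub {β a x y : ℝ} (hβ : 1 ≤ β) (ha : a ∈ Ioo 0 1)
    (haβ : a ^ β = 1 - a) (hx : x ∈ Ioo 0 1) (h1 : (1 - a) / a * x ≤ y)
    (h2 : 1 - y ≤ a / (1 - a) * (1 - x)) : x ^ β ≤ y := by
  obtain ⟨ha0, ha1⟩ := ha
  obtain ⟨hx0, hx1⟩ := hx
  rcases le_or_gt x a with hxa | hax
  · calc x ^ β = x ^ (β - 1) * x := by rw [rpow_sub_one hx0.ne', div_mul_cancel₀ _ hx0.ne']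
      _ ≤ a ^ (β - 1) * x := by gcongr
      _ = (1 - a) / a * x := by rw [rpow_sub_one ha0.ne', haβ]
      _ ≤ y := h1
  · have hchord := (convexOn_rpow hβ).secant_mono_aux1 (mem_Ici.2 ha0.le) (mem_Ici.2 zero_le_one)
      hax hx1
    rw [one_rpow, haβ] at hchord
    have h2' : (1 - a) * (1 - y) ≤ a * (1 - x) := by
      rwa [div_mul_eq_mul_div, le_div_iff₀ (by linarith), mul_comm] at h2
    refine le_of_mul_le_mul_left ?_ (sub_pos.2 ha1)
    linarith

theorem one_le_log_div_log_of_one_le {α : ℝ} (hα : 1 ≤ α) :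
    1 ≤ log (1 + α) / log (1 + 1 / α) := by
  have hinv : 0 < 1 / α := by positivity
  rw [one_le_div (log_pos (by linarith))]
  exact log_le_log (by linarith) (by linarith [div_le_self zero_le_one hα])

theorem div_one_add_rpow_log_div_log {α : ℝ} (hα : 0 < α) :
    (α / (1 + α)) ^ (log (1 + α) / log (1 + 1 / α)) = 1 - α / (1 + α) := by
  have hinv : 0 < 1 / α := by positivity
  have hbase : α / (1 + α) = (1 + 1 / α)⁻¹ := by field_simp; ring
  rw [hbase, inv_rpow (by positivity), ← logb, rpow_logb (by positivity) (by linarith)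
    (by positivity)]
  field_simp
  ring

theorem stmt_0_general (α x y : ℝ) (hα : 1 < α) (hx : x ∈ Set.Ioo (0:ℝ) 1)
    (h1 : x / α ≤ y) (h2 : 1 - y ≤ α * (1 - x)) :
    x ^ (Real.log (1 + α) / Real.log (1 + 1 / α)) ≤ y := by
  have hα0 : 0 < α := by linarith
  have hslope : (1 - α / (1 + α)) / (α / (1 + α)) = 1 / α := by field_simp; ring
  have hslope' : α / (1 + α) / (1 - α / (1 + α)) = α := by field_simp; ring
  refine rpow_le_of_rpow_eq_one_sub (one_le_log_div_log_of_one_le hα.le)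
    ⟨by positivity, (div_lt_one (by positivity)).2 (by linarith)⟩
    (div_one_add_rpow_log_div_log hα0) hx ?_ (by rwa [hslope'])
  rwa [hslope, one_div_mul_eq_div]

theorem stmt_0 (α x y : ℝ) (hα : 1 < α) (hx : x ∈ Set.Ioo (0:ℝ) 1)
    (hy : y ∈ Set.Ioo (0:ℝ) 1) (h1 : x / α ≤ y) (h2 : 1 - y ≤ α * (1 - x)) :
    x ^ (Real.log (1 + α) / Real.log (1 + 1 / α)) ≤ y :=
  stmt_0_general α x y hα hx h1 h2
end

section
/- Let f(t) = max(t/α, 1 - α + α·t) and g(t) = t^(log(1+α)/log(1+1/α)) for α > 1. Then f(0) = g(0) = 0, f(α/(1+α)) = g(α/(1+α)) = 1/(1+α), f(1) = g(1) = 1, and f(t) ≥ g(t) for all t ∈ [0,1]. -/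
theorem stmt_1 (α : ℝ) (hα : 1 < α)
    (f g : ℝ → ℝ)
    (hf : ∀ t, f t = max (t / α) (1 - α + α * t))
    (hg : ∀ t, g t = t ^ (Real.log (1 + α) / Real.log (1 + 1 / α))) :
    f 0 = 0 ∧ g 0 = 0 ∧
    f (α / (1 + α)) = 1 / (1 + α) ∧ g (α / (1 + α)) = 1 / (1 + α) ∧
    f 1 = 1 ∧ g 1 = 1 ∧
    ∀ t ∈ Set.Icc (0:ℝ) 1, g t ≤ f t := by
  have hα0 : 0 < α := by linarith
  have h1α : 0 < 1 + α := by linarith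
  have hinv : 0 < 1 / α := by positivity
  have hbase : (1 : ℝ) < 1 + 1 / α := by linarith
  have hL : 0 < Real.log (1 + 1 / α) := Real.log_pos hbase
  set p := Real.log (1 + α) / Real.log (1 + 1 / α) with hp
  have hp1 : 1 ≤ p := by
    rw [hp, le_div_iff₀ hL, one_mul]
    have h1 : 1 / α ≤ α := by
      rw [div_le_iff₀ hα0]; nlinarith
    exact Real.log_le_log (by linarith) (by linarith)
  have hp0 : p ≠ 0 := by positivity
  set c := α / (1 + α) with hcdef
  have hc0 : 0 < c := by positivity
  have hc1 : c < 1 := by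
    rw [hcdef, div_lt_one h1α]; linarith
  have hcinv : c = (1 + 1 / α)⁻¹ := by
    have h : 1 + 1 / α = (1 + α) / α := by
      field_simp
      ring
    rw [hcdef, h, inv_div]
  have hbasep : (1 + 1 / α) ^ p = 1 + α := by
    rw [Real.rpow_def_of_pos (by linarith), mul_comm, hp,
      div_mul_cancel₀ _ (ne_of_gt hL), Real.exp_log h1α]
  have hgc : c ^ p = 1 / (1 + α) := by
    rw [hcinv, Real.inv_rpow (by linarith), hbasep, one_div]
  have hfc : f c = 1 / (1 + α) := by
    have h1 : c / α = 1 / (1 + α) := by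
      rw [hcdef]
      field_simp
    have h2 : 1 - α + α * c = 1 / (1 + α) := by
      rw [hcdef]
      field_simp
      ring
    rw [hf, h1, h2, max_self]
  have hconv : ConvexOn ℝ (Set.Ici (0:ℝ)) fun x : ℝ => x ^ p :=
    convexOn_rpow hp1
  refine ⟨?_, ?_, hfc, by rw [hg]; exact hgc, ?_, ?_, ?_⟩
  · rw [hf]; simp; linarith
  · rw [hg]; exact Real.zero_rpow hp0
  · rw [hf]
    have : (1:ℝ) - α + α * 1 = 1 := by ring
    rw [this, max_eq_right]; rw [div_le_one hα0]; linarith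
  · rw [hg]; exact Real.one_rpow _
  · intro t ht
    obtain ⟨ht0, ht1⟩ := ht
    rw [hg, hf]
    rcases le_or_gt t c with hcase | hcase
    · -- chord from 0 to c : t^p ≤ t/α
      have hs0 : 0 ≤ t / c := by positivity
      have hs1 : t / c ≤ 1 := by rw [div_le_one hc0]; exact hcase
      have key := hconv.2 (Set.mem_Ici.mpr le_rfl) (Set.mem_Ici.mpr hc0.le)
        (by linarith : (0:ℝ) ≤ 1 - t / c) hs0 (by ring)
      simp only [smul_eq_mul, mul_zero, zero_add] at key
      have ht' : t / c * c = t := div_mul_cancel₀ _ (ne_of_gt hc0)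
      rw [ht'] at key
      have : t ^ p ≤ (1 - t / c) * 0 ^ p + t / c * c ^ p := key
      rw [Real.zero_rpow hp0, hgc] at this
      refine le_trans this (le_trans (le_of_eq ?_) (le_max_left _ _))
      rw [hcdef]
      field_simp
      ring
    · -- chord from c to 1 : t^p ≤ 1 - α + α t
      have h1c : 0 < 1 - c := by linarith
      set s := (t - c) / (1 - c) with hsdef
      have hs0 : 0 ≤ s := by
        apply div_nonneg (by linarith) h1c.le
      have hs1 : s ≤ 1 := by
        rw [hsdef, div_le_one h1c]; linarith
      have key := hconv.2 (Set.mem_Ici.mpr hc0.le) (Set.mem_Ici.mpr (by norm_num : (0:ℝ) ≤ 1))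
        (by linarith : (0:ℝ) ≤ 1 - s) hs0 (by ring)
      simp only [smul_eq_mul, mul_one] at key
      have ht' : (1 - s) * c + s = t := by
        rw [hsdef]; field_simp; ring
      rw [ht'] at key
      rw [hgc, Real.one_rpow] at key
      refine le_trans key (le_trans (le_of_eq ?_) (le_max_right _ _))
      rw [hsdef, hcdef]
      field_simp
      ring
end

section
/- Fix ε ∈ (0, 1/2) and q₀ ∈ (1/2, 1). There exists m ∈ ℕ such that for any finite index set S with |S| ≥ m and any family of pairs (p_j, q_j)_{j∈S} with p_j, q_j ∈ [ε, 1−ε] and p_j ≥ (1+ε)·q_j, the sum χ_S of independent log-likelihood-ratio variables χ_j (with χ_j = log(p_j/q_j) w.p. p_j and log((1−p_j)/(1−q_j)) w.p. 1−p_j under H, and w.p. q_j, 1−q_j under L) satisfies P_H[χ_S ≥ log(q₀/(1−q₀))] ≥ q₀ and P_L[χ_S ≤ −log(q₀/(1−q₀))] ≥ q₀. -/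
/-!
Under `H` the log-likelihood ratio `χ_j` has mean `KL(p_j ‖ q_j)` and under `L` it has
mean `-KL(q_j ‖ p_j)`, where `KL` is the Kullback–Leibler divergence of Bernoulli laws.
Both divergences are at least `(p_j - q_j)² / 2 ≥ ε⁴ / 2`, while `|χ_j| ≤ log ((1 - ε) / ε)`.
So `χ_S` has mean of order `|S|` with the right sign and variance `O(|S|)`, and Chebyshev's
inequality puts it beyond the fixed threshold `± log (q₀ / (1 - q₀))` with probability at
least `q₀` once `|S|` is large.
-/

open MeasureTheory ProbabilityTheory Real Filter Topology

lemma add_sq_div_two_le_neg_log_one_sub {x : ℝ} (h0 : 0 ≤ x) (h1 : x < 1) :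
    x + x ^ 2 / 2 ≤ -log (1 - x) := by
  have hsum := hasSum_pow_div_log_of_abs_lt_one (abs_lt.mpr ⟨by linarith, h1⟩)
  have := sum_le_hasSum (Finset.range 2) (fun i _ => by positivity) hsum
  norm_num [Finset.sum_range_succ] at this
  linarith

noncomputable def klBernoulli (a b : ℝ) : ℝ :=
  a * log (a / b) + (1 - a) * log ((1 - a) / (1 - b))

lemma klBernoulli_one_sub (a b : ℝ) : klBernoulli (1 - a) (1 - b) = klBernoulli a b := by
  simp only [klBernoulli, sub_sub_cancel]; ring

lemma sq_sub_div_two_le_klBernoulli_of_le {a b : ℝ} (hb : 0 < b) (hba : b ≤ a) (ha : a < 1) :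
    (a - b) ^ 2 / 2 ≤ klBernoulli a b := by
  have ha0 : 0 < a := hb.trans_le hba
  have hfirst : (a - b) + (a - b) ^ 2 / 2 ≤ a * log (a / b) := by
    have hq := add_sq_div_two_le_neg_log_one_sub (x := (a - b) / a)
      (div_nonneg (sub_nonneg.mpr hba) ha0.le) (by rw [div_lt_one ha0]; linarith)
    rw [show 1 - (a - b) / a = (a / b)⁻¹ by field_simp; ring, log_inv, neg_neg] at hq
    have hsq : (a - b) ^ 2 ≤ (a - b) ^ 2 / a := by
      rw [le_div_iff₀ ha0]; nlinarith [sq_nonneg (a - b)]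
    calc (a - b) + (a - b) ^ 2 / 2 ≤ a * ((a - b) / a + ((a - b) / a) ^ 2 / 2) := by
          field_simp; nlinarith
      _ ≤ a * log (a / b) := by gcongr
  have hsecond : b - a ≤ (1 - a) * log ((1 - a) / (1 - b)) := by
    have hl := one_sub_inv_le_log_of_pos (div_pos (sub_pos.mpr ha) (by linarith : (0:ℝ) < 1 - b))
    calc b - a = (1 - a) * (1 - ((1 - a) / (1 - b))⁻¹) := by
          rw [inv_div]; field_simp [(sub_pos.mpr ha).ne']; ring
      _ ≤ _ := by gcongr
  unfold klBernoulli
  linarith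

lemma sq_sub_div_two_le_klBernoulli {a b : ℝ} (ha : a ∈ Set.Ioo (0 : ℝ) 1)
    (hb : b ∈ Set.Ioo (0 : ℝ) 1) : (a - b) ^ 2 / 2 ≤ klBernoulli a b := by
  rcases le_total b a with hba | hab
  · exact sq_sub_div_two_le_klBernoulli_of_le hb.1 hba ha.2
  · rw [← klBernoulli_one_sub]
    convert sq_sub_div_two_le_klBernoulli_of_le (a := 1 - a) (b := 1 - b)
      (by linarith [hb.2]) (by linarith) (by linarith [ha.1]) using 1
    ring

lemma pow_four_div_two_le_klBernoulli {ε p q : ℝ} (hε : 0 < ε) (hp : p ∈ Set.Icc ε (1 - ε))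
    (hq : q ∈ Set.Icc ε (1 - ε)) (hpq : (1 + ε) * q ≤ p) :
    ε ^ 4 / 2 ≤ klBernoulli p q ∧ ε ^ 4 / 2 ≤ klBernoulli q p := by
  have hunit : ∀ a ∈ Set.Icc ε (1 - ε), a ∈ Set.Ioo (0 : ℝ) 1 :=
    fun a ha => ⟨hε.trans_le ha.1, by linarith [ha.2]⟩
  have hgap : ε ^ 2 ≤ p - q := by nlinarith [hq.1]
  have hsq : ε ^ 4 / 2 ≤ (p - q) ^ 2 / 2 := by nlinarith
  exact ⟨hsq.trans (sq_sub_div_two_le_klBernoulli (hunit p hp) (hunit q hq)),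
    hsq.trans ((sq_sub_div_two_le_klBernoulli (hunit q hq) (hunit p hp)).trans_eq' (by ring))⟩

lemma abs_log_div_le {ε a b : ℝ} (hε : 0 < ε) (ha : a ∈ Set.Icc ε (1 - ε))
    (hb : b ∈ Set.Icc ε (1 - ε)) : |log (a / b)| ≤ log ((1 - ε) / ε) := by
  have ha0 : 0 < a := hε.trans_le ha.1
  have hb0 : 0 < b := hε.trans_le hb.1
  rw [log_div ha0.ne' hb0.ne', log_div (by linarith [ha.1, ha.2]) hε.ne', abs_sub_le_iff]
  constructor <;> linarith [log_le_log hε ha.1, log_le_log ha0 ha.2, log_le_log hε hb.1,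
    log_le_log hb0 hb.2]

noncomputable def logLikelihoodRatio (p q : ℝ) (b : Bool) : ℝ :=
  if b = true then log (p / q) else log ((1 - p) / (1 - q))

lemma abs_logLikelihoodRatio_le {ε p q : ℝ} (hε : 0 < ε) (hp : p ∈ Set.Icc ε (1 - ε))
    (hq : q ∈ Set.Icc ε (1 - ε)) (b : Bool) :
    |logLikelihoodRatio p q b| ≤ log ((1 - ε) / ε) := by
  have hsub : ∀ a ∈ Set.Icc ε (1 - ε), 1 - a ∈ Set.Icc ε (1 - ε) :=
    fun a ha => ⟨by linarith [ha.2], by linarith [ha.1]⟩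
  cases b
  · exact abs_log_div_le hε (hsub p hp) (hsub q hq)
  · exact abs_log_div_le hε hp hq

section Probability

variable {Ω : Type*} [MeasurableSpace Ω] {μ : Measure Ω} [IsProbabilityMeasure μ]

lemma integral_comp_bool {X : Ω → Bool} (hX : Measurable X) (g : Bool → ℝ) :
    ∫ ω, g (X ω) ∂μ = μ.real {ω | X ω = true} * g true
      + (1 - μ.real {ω | X ω = true}) * g false := by
  rw [← integral_map hX.aemeasurable (by fun_prop),
    integral_fintype Integrable.of_finite, Fintype.sum_bool]
  simp only [map_measureReal_apply hX (measurableSet_singleton _), smul_eq_mul]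
  rw [show X ⁻¹' {false} = (X ⁻¹' {true})ᶜ by ext; simp,
    probReal_compl_eq_one_sub (hX (measurableSet_singleton true))]
  rfl

lemma one_sub_variance_div_le_measureReal_le {X : Ω → ℝ} (hX : MemLp X 2 μ) {T : ℝ}
    (hT : T < μ[X]) : 1 - variance X μ / (μ[X] - T) ^ 2 ≤ μ.real {ω | T ≤ X ω} := by
  have hlow : {ω | X ω < T} ⊆ {ω | μ[X] - T ≤ |X ω - μ[X]|} := fun ω (hω : X ω < T) => by
    rw [Set.mem_ofPred_eq, abs_sub_comm]
    exact le_abs.mpr (Or.inl (by linarith))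
  have hcheb : μ.real {ω | X ω < T} ≤ variance X μ / (μ[X] - T) ^ 2 :=
    ENNReal.toReal_le_of_le_ofReal (div_nonneg (variance_nonneg _ _) (sq_nonneg _))
      ((measure_mono hlow).trans (meas_ge_le_variance_div_sq hX (sub_pos.mpr hT)))
  rw [show {ω | T ≤ X ω} = {ω | X ω < T}ᶜ by ext; simp,
    probReal_compl_eq_one_sub₀ (nullMeasurableSet_lt hX.1.aemeasurable aemeasurable_const)]
  linarith

lemma one_sub_div_card_le_measureReal_le_sum {ι : Type*} [Fintype ι] {χ : ι → Ω → ℝ}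
    (hmeas : ∀ j, AEMeasurable (χ j) μ) (hindep : iIndepFun χ μ) {C ρ T : ℝ} (hT : 0 < T)
    (hbound : ∀ j ω, |χ j ω| ≤ C) (hmean : ∀ j, ρ ≤ μ[χ j])
    (hTρ : T ≤ Fintype.card ι * ρ / 2) :
    1 - (2 * C / ρ) ^ 2 / Fintype.card ι ≤ μ.real {ω | T ≤ ∑ j, χ j ω} := by
  set n : ℝ := (Fintype.card ι : ℝ)
  have hnρ : 0 < n * ρ := by linarith
  have hn : 0 < n := lt_of_le_of_ne (Nat.cast_nonneg _) fun h => by simp [← h] at hnρ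
  have hρ : 0 < ρ := pos_of_mul_pos_right hnρ hn.le
  have hIcc (j : ι) : ∀ᵐ ω ∂μ, χ j ω ∈ Set.Icc (-C) C := .of_forall fun ω => abs_le.mp (hbound j ω)
  have hL2 (j : ι) : MemLp (χ j) 2 μ := memLp_of_bounded (hIcc j) (hmeas j).aestronglyMeasurable 2
  have hmean_sum : n * ρ ≤ ∫ ω, ∑ j, χ j ω ∂μ := by
    rw [integral_finsetSum _ fun j _ => (hL2 j).integrable one_le_two]
    simpa [n] using Finset.sum_le_sum fun j (_ : j ∈ Finset.univ) => hmean j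
  have hvar_sum : variance (∑ j, χ j) μ ≤ n * C ^ 2 := by
    rw [IndepFun.variance_sum (fun j _ => hL2 j) fun i _ j _ hij => hindep.indepFun hij]
    calc ∑ j, variance (χ j) μ ≤ ∑ _j : ι, C ^ 2 := Finset.sum_le_sum fun j _ =>
          (variance_le_sq_of_bounded (hIcc j) (hmeas j)).trans_eq (by ring)
      _ = n * C ^ 2 := by simp [n]
  have hcheb := one_sub_variance_div_le_measureReal_le (memLp_finsetSum' _ fun j _ => hL2 j)
    (show T < μ[∑ j, χ j] by simp only [Finset.sum_apply]; linarith)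
  simp only [Finset.sum_apply] at hcheb
  refine le_trans ?_ hcheb
  calc 1 - (2 * C / ρ) ^ 2 / n = 1 - n * C ^ 2 / (n * ρ / 2) ^ 2 := by field_simp
    _ ≤ 1 - variance (∑ j, χ j) μ / ((∫ ω, ∑ j, χ j ω ∂μ) - T) ^ 2 := by
      gcongr
      linarith

lemma integral_logLikelihoodRatio_eq_klBernoulli {X : Ω → Bool} (hX : Measurable X) {p q : ℝ}
    (hp : μ.real {ω | X ω = true} = p) :
    ∫ ω, logLikelihoodRatio p q (X ω) ∂μ = klBernoulli p q := by
  rw [integral_comp_bool hX, hp]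
  rfl

lemma integral_logLikelihoodRatio_eq_neg_klBernoulli {X : Ω → Bool} (hX : Measurable X)
    {p q : ℝ} (hq : μ.real {ω | X ω = true} = q) :
    ∫ ω, logLikelihoodRatio p q (X ω) ∂μ = -klBernoulli q p := by
  rw [integral_comp_bool hX, hq]
  simp only [logLikelihoodRatio, klBernoulli, if_true, Bool.false_eq_true, if_false]
  rw [← inv_div p, ← inv_div (1 - p), log_inv, log_inv]
  ring

end Probability

/-- If `|S| ≥ m` conditionally independent binary signals each have likelihood ratios
bounded as stated, the sum of log-likelihood ratios crosses the threshold
`log(q₀/(1-q₀))` with probability at least `q₀` under each state. -/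
theorem stmt_12 (ε q₀ : ℝ) (hε : ε ∈ Set.Ioo (0:ℝ) (1/2)) (hq₀ : q₀ ∈ Set.Ioo (1/2 : ℝ) 1) :
    ∃ m : ℕ, ∀ n : ℕ, m ≤ n → ∀ p q : Fin n → ℝ,
      (∀ j, p j ∈ Set.Icc ε (1 - ε)) → (∀ j, q j ∈ Set.Icc ε (1 - ε)) →
      (∀ j, (1 + ε) * q j ≤ p j) →
      ∀ (Ω : Type) (_ : MeasurableSpace Ω) (μH μL : Measure Ω),
        IsProbabilityMeasure μH → IsProbabilityMeasure μL →
        ∀ X : Fin n → Ω → Bool, (∀ j, Measurable (X j)) →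
        iIndepFun X μH →
        iIndepFun X μL →
        (∀ j, (μH {ω | X j ω = true}).toReal = p j) →
        (∀ j, (μL {ω | X j ω = true}).toReal = q j) →
        (μH {ω | Real.log (q₀ / (1 - q₀)) ≤
            ∑ j, (if X j ω = true then Real.log (p j / q j)
              else Real.log ((1 - p j) / (1 - q j)))}).toReal ≥ q₀ ∧
        (μL {ω | ∑ j, (if X j ω = true then Real.log (p j / q j)
              else Real.log ((1 - p j) / (1 - q j)))
            ≤ -Real.log (q₀ / (1 - q₀))}).toReal ≥ q₀ := by
  set T := log (q₀ / (1 - q₀))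
  set C := log ((1 - ε) / ε)
  set ρ : ℝ := ε ^ 4 / 2
  have hT : 0 < T := log_pos (by rw [lt_div_iff₀ (by linarith [hq₀.2])]; linarith [hq₀.1])
  have hρ : 0 < ρ := by have := hε.1; positivity
  obtain ⟨m, hm⟩ : ∃ m : ℕ, ∀ n ≥ m, T ≤ n * ρ / 2 ∧ (2 * C / ρ) ^ 2 / n ≤ 1 - q₀ := by
    refine eventually_atTop.mp (Eventually.and ?_ ?_)
    · exact ((tendsto_natCast_atTop_atTop.atTop_mul_const hρ).atTop_div_const
        two_pos).eventually_ge_atTop T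
    · exact (tendsto_const_div_atTop_nhds_zero_nat _).eventually
        (ge_mem_nhds (by linarith [hq₀.2]))
  refine ⟨m, fun n hn p q hp hq hpq Ω _ μH μL _ _ X hX hindH hindL hpX hqX => ?_⟩
  obtain ⟨hTn, hδn⟩ := hm n hn
  have hbound (j : Fin n) (ω : Ω) : |logLikelihoodRatio (p j) (q j) (X j ω)| ≤ C :=
    abs_logLikelihoodRatio_le hε.1 (hp j) (hq j) _
  have hmeas (j : Fin n) : Measurable (logLikelihoodRatio (p j) (q j)) := measurable_from_top
  have hkl (j : Fin n) := pow_four_div_two_le_klBernoulli hε.1 (hp j) (hq j) (hpq j)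
  constructor
  · have hH := one_sub_div_card_le_measureReal_le_sum (μ := μH) (C := C) (ρ := ρ)
      (χ := fun j ω => logLikelihoodRatio (p j) (q j) (X j ω))
      (fun j => ((hmeas j).comp (hX j)).aemeasurable) (hindH.comp _ hmeas) hT hbound
      (fun j => (integral_logLikelihoodRatio_eq_klBernoulli (hX j) (hpX j)).symm ▸ (hkl j).1)
      (by rwa [Fintype.card_fin])
    simp only [Fintype.card_fin] at hH
    exact le_trans (by linarith) hH
  · have hL := one_sub_div_card_le_measureReal_le_sum (μ := μL) (C := C) (ρ := ρ)
      (χ := fun j ω => -logLikelihoodRatio (p j) (q j) (X j ω))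
      (fun j => ((hmeas j).comp (hX j)).neg.aemeasurable)
      (hindL.comp _ fun j => (hmeas j).neg) hT
      (fun j ω => (abs_neg _).trans_le (hbound j ω))
      (fun j => by
        rw [integral_neg, integral_logLikelihoodRatio_eq_neg_klBernoulli (hX j) (hqX j), neg_neg]
        exact (hkl j).2)
      (by rwa [Fintype.card_fin])
    simp only [Fintype.card_fin, Finset.sum_neg_distrib, le_neg] at hL
    exact le_trans (by linarith) hL
end
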